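/- arXiv:2404.03895 — 7 statements merged into one kernel-verified Lean document; each statement's English description precedes it below -/
import Mathlib

section
/- Let G be a finite group and H a non-trivial proper normal subgroup of G. The normal subgroup based power graph Γ_H(G) is a complete graph if and only if the quotient group G/H is a cyclic p-group for some prime p. -/
/-!
Adjacency in `Γ_H(G)` only sees cosets, every coset has a representative among the vertices
(`e` for `H` itself) and two vertices in one coset are adjacent with `m = 1`, so `Γ_H(G)` is
complete exactly when the power graph of `G ⧸ H` is. In a finite group that happens iff any two
cyclic subgroups are comparable. Comparable cyclic subgroups force an element of maximal order
to generate, and forbid elements of two different prime orders, so by Cauchy the group is a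
cyclic `p`-group; conversely, in a cyclic `p`-group element orders are comparable powers of `p`.
-/

/-- The vertex set of the normal subgroup based power graph: `(G \ H) ∪ {e}`. -/
def nsbVertexSet {G : Type*} [Group G] (H : Subgroup G) : Set G :=
  {x | x ∉ H} ∪ {1}

/-- The normal subgroup based power graph `Γ_H(G)`: vertices are `(G \ H) ∪ {e}` and two
distinct vertices `a`, `b` are adjacent iff `aH = b^m H` or `bH = a^n H` for some
positive integers `m`, `n`. -/
def nsbPowerGraph (G : Type*) [Group G] (H : Subgroup G) :
    SimpleGraph (nsbVertexSet H) where
  Adj a b := (a : G) ≠ (b : G) ∧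
    ((∃ m : ℕ, 0 < m ∧ (QuotientGroup.mk (a : G) : G ⧸ H) = QuotientGroup.mk ((b : G) ^ m)) ∨
     (∃ n : ℕ, 0 < n ∧ (QuotientGroup.mk (b : G) : G ⧸ H) = QuotientGroup.mk ((a : G) ^ n)))
  symm := ⟨fun a b ⟨hne, h⟩ => ⟨hne.symm, h.symm⟩⟩
  loopless := ⟨fun a ⟨hne, _⟩ => hne rfl⟩

/-- The power graph of a group: two distinct elements are adjacent iff one is a positive
power of the other. -/
def powerGraph (K : Type*) [Group K] : SimpleGraph K where
  Adj x y := x ≠ y ∧ ((∃ m : ℕ, 0 < m ∧ x = y ^ m) ∨ (∃ n : ℕ, 0 < n ∧ y = x ^ n))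
  symm := ⟨fun x y ⟨hne, h⟩ => ⟨hne.symm, h.symm⟩⟩
  loopless := ⟨fun x ⟨hne, _⟩ => hne rfl⟩

/-- The complete graph `K_n`. -/
def kGraph (n : ℕ) : SimpleGraph (Fin n) := ⊤

/-- The disjoint union `mK_n` of `m` copies of the complete graph `K_n`. -/
def unionKGraph (m n : ℕ) : SimpleGraph (Fin m × Fin n) where
  Adj x y := x.1 = y.1 ∧ x.2 ≠ y.2
  symm := ⟨fun x y ⟨h1, h2⟩ => ⟨h1.symm, h2.symm⟩⟩
  loopless := ⟨fun x ⟨_, h⟩ => h rfl⟩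

/-- The join `Γ₁ ∨ Γ₂` of two graphs: their disjoint union together with all edges
between the two parts. -/
def graphJoin {α β : Type*} (G : SimpleGraph α) (H : SimpleGraph β) :
    SimpleGraph (α ⊕ β) where
  Adj u v := match u, v with
    | Sum.inl u, Sum.inl v => G.Adj u v
    | Sum.inr u, Sum.inr v => H.Adj u v
    | _, _ => True
  symm := ⟨fun u v => match u, v with
    | Sum.inl u, Sum.inl v => G.adj_symm
    | Sum.inr u, Sum.inr v => H.adj_symm
    | Sum.inl _, Sum.inr _ | Sum.inr _, Sum.inl _ => fun _ => trivial⟩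
  loopless := ⟨fun u => by cases u <;> simp [SimpleGraph.irrefl]⟩

open Subgroup

section PowerRelation

variable {K : Type*} [Group K]

lemma exists_pos_pow_eq_iff_mem_zpowers [Finite K] {x y : K} :
    (∃ m : ℕ, 0 < m ∧ x = y ^ m) ↔ x ∈ zpowers y := by
  refine ⟨fun ⟨m, _, hm⟩ => hm ▸ npow_mem_zpowers y m, fun h => ?_⟩
  obtain ⟨m, rfl⟩ := mem_powers_iff_mem_zpowers.2 h
  exact ⟨m + orderOf y, by have := orderOf_pos y; omega, by
    rw [pow_add, pow_orderOf_eq_one, mul_one]⟩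

lemma powerGraph_eq_top_iff [Finite K] :
    powerGraph K = ⊤ ↔ ∀ x y : K, x ∈ zpowers y ∨ y ∈ zpowers x := by
  simp only [SimpleGraph.eq_top_iff_forall_ne_adj, powerGraph, exists_pos_pow_eq_iff_mem_zpowers]
  refine ⟨fun h x y => ?_, fun h x y hxy => ⟨hxy, h x y⟩⟩
  by_cases hxy : x = y
  · exact .inl (hxy ▸ mem_zpowers y)
  · exact (h x y hxy).2

/-- In a cyclic group, `x` is a power of `y` as soon as its order divides that of `y`:
the powers of `y` already exhaust the at most `orderOf y` solutions of `z ^ orderOf y = 1`. -/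
lemma IsCyclic.mem_zpowers_of_orderOf_dvd [Finite K] [IsCyclic K] {x y : K}
    (h : orderOf x ∣ orderOf y) : x ∈ zpowers y := by
  classical
  cases nonempty_fintype K
  have hsub : (zpowers y : Set K).toFinset ⊆ ({z | z ^ orderOf y = 1} : Finset K) := fun z hz =>
    Finset.mem_filter.2 ⟨Finset.mem_univ z,
      orderOf_dvd_iff_pow_eq_one.1 (orderOf_dvd_of_mem_zpowers (Set.mem_toFinset.1 hz))⟩
  have heq := Finset.eq_of_subset_of_card_le hsub (by
    rw [Set.toFinset_card, ← Nat.card_eq_fintype_card, SetLike.coe_sort_coe, Nat.card_zpowers]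
    exact IsCyclic.card_pow_eq_one_le (orderOf_pos y))
  have hx : x ∈ ({z | z ^ orderOf y = 1} : Finset K) := by
    simpa using orderOf_dvd_iff_pow_eq_one.1 h
  simpa [← heq] using hx

lemma IsCyclic.mem_zpowers_or_mem_zpowers_of_isPGroup [Finite K] [IsCyclic K] {p : ℕ}
    (hp : p.Prime) (hK : IsPGroup p K) (x y : K) : x ∈ zpowers y ∨ y ∈ zpowers x := by
  have := Fact.mk hp
  obtain ⟨a, ha⟩ := IsPGroup.iff_orderOf.1 hK x
  obtain ⟨b, hb⟩ := IsPGroup.iff_orderOf.1 hK y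
  rcases le_total a b with hab | hab
  · exact .inl (mem_zpowers_of_orderOf_dvd (ha ▸ hb ▸ pow_dvd_pow p hab))
  · exact .inr (mem_zpowers_of_orderOf_dvd (ha ▸ hb ▸ pow_dvd_pow p hab))

lemma isCyclic_of_forall_mem_zpowers_or_mem_zpowers [Finite K]
    (h : ∀ x y : K, x ∈ zpowers y ∨ y ∈ zpowers x) : IsCyclic K := by
  cases nonempty_fintype K
  obtain ⟨g, -, hg⟩ :=
    Finset.exists_max_image (Finset.univ : Finset K) orderOf Finset.univ_nonempty
  refine ⟨g, fun y => (h y g).elim id fun hgy => ?_⟩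
  have hle : zpowers g ≤ zpowers y := zpowers_le.2 hgy
  show y ∈ zpowers g
  rw [eq_of_le_of_card_ge hle (by simpa only [Nat.card_zpowers] using hg y (Finset.mem_univ y))]
  exact mem_zpowers y

lemma eq_of_prime_dvd_natCard_of_forall_mem_zpowers_or_mem_zpowers [Finite K]
    (h : ∀ x y : K, x ∈ zpowers y ∨ y ∈ zpowers x)
    {p q : ℕ} (hp : p.Prime) (hq : q.Prime) (hpK : p ∣ Nat.card K) (hqK : q ∣ Nat.card K) :
    p = q := by
  have := Fact.mk hp
  have := Fact.mk hq
  obtain ⟨a, ha⟩ := exists_prime_orderOf_dvd_card' p hpK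
  obtain ⟨b, hb⟩ := exists_prime_orderOf_dvd_card' q hqK
  rcases h a b with hab | hab
  · exact (Nat.prime_dvd_prime_iff_eq hp hq).1 (ha ▸ hb ▸ orderOf_dvd_of_mem_zpowers hab)
  · exact ((Nat.prime_dvd_prime_iff_eq hq hp).1
      (ha ▸ hb ▸ orderOf_dvd_of_mem_zpowers hab)).symm

lemma exists_isPGroup_of_forall_mem_zpowers_or_mem_zpowers [Finite K]
    (h : ∀ x y : K, x ∈ zpowers y ∨ y ∈ zpowers x) :
    ∃ p : ℕ, p.Prime ∧ IsPGroup p K := by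
  rcases subsingleton_or_nontrivial K with hK | hK
  · exact ⟨2, Nat.prime_two, .of_subsingleton 2 K⟩
  obtain ⟨p, hp, hpK⟩ := Nat.exists_prime_and_dvd (Finite.one_lt_card (α := K)).ne'
  refine ⟨p, hp, (isPGroup_iff_primeFactors_card_subset hp.ne_zero).2 fun q hq => ?_⟩
  rw [eq_of_prime_dvd_natCard_of_forall_mem_zpowers_or_mem_zpowers h
    (Nat.prime_of_mem_primeFactors hq) hp (Nat.dvd_of_mem_primeFactors hq) hpK, hp.primeFactors]
  exact Finset.mem_singleton_self p

lemma forall_mem_zpowers_or_mem_zpowers_iff [Finite K] :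
    (∀ x y : K, x ∈ zpowers y ∨ y ∈ zpowers x) ↔
      IsCyclic K ∧ ∃ p : ℕ, p.Prime ∧ IsPGroup p K :=
  ⟨fun h => ⟨isCyclic_of_forall_mem_zpowers_or_mem_zpowers h,
      exists_isPGroup_of_forall_mem_zpowers_or_mem_zpowers h⟩,
    fun ⟨_, _, hp, hK⟩ => IsCyclic.mem_zpowers_or_mem_zpowers_of_isPGroup hp hK⟩

end PowerRelation

section Quotient

variable {G : Type*} [Group G] {H : Subgroup G} [H.Normal]

lemma exists_mem_nsbVertexSet_mk_eq (x : G ⧸ H) :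
    ∃ a ∈ nsbVertexSet H, (a : G ⧸ H) = x := by
  by_cases hx : x = 1
  · exact ⟨1, .inr rfl, hx ▸ QuotientGroup.mk_one H⟩
  · obtain ⟨a, rfl⟩ := QuotientGroup.mk_surjective x
    exact ⟨a, .inl fun ha => hx ((QuotientGroup.eq_one_iff a).2 ha), rfl⟩

lemma nsbPowerGraph_eq_top_iff : nsbPowerGraph G H = ⊤ ↔ powerGraph (G ⧸ H) = ⊤ := by
  simp only [SimpleGraph.eq_top_iff_forall_ne_adj, nsbPowerGraph, powerGraph, Subtype.forall,
    ne_eq, Subtype.mk.injEq, QuotientGroup.mk_pow]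
  constructor
  · intro h x y hxy
    obtain ⟨a, ha, rfl⟩ := exists_mem_nsbVertexSet_mk_eq x
    obtain ⟨b, hb, rfl⟩ := exists_mem_nsbVertexSet_mk_eq y
    exact ⟨hxy, (h a ha b hb (by rintro rfl; exact hxy rfl)).2⟩
  · intro h a _ b _ hab
    refine ⟨hab, ?_⟩
    by_cases hq : (a : G ⧸ H) = b
    · exact .inl ⟨1, one_pos, by rw [hq, pow_one]⟩
    · exact (h a b hq).2

end Quotient

theorem statement_2_general {G : Type*} [Group G] [Fintype G] (H : Subgroup G) [H.Normal] :
    nsbPowerGraph G H = ⊤ ↔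
      (IsCyclic (G ⧸ H) ∧ ∃ p : ℕ, p.Prime ∧ IsPGroup p (G ⧸ H)) := by
  rw [nsbPowerGraph_eq_top_iff, powerGraph_eq_top_iff, forall_mem_zpowers_or_mem_zpowers_iff]

/-- For a non-trivial proper normal subgroup `H` of a finite group `G`,
`Γ_H(G)` is complete iff `G/H` is a cyclic `p`-group for some prime `p`. -/
theorem statement_2 {G : Type*} [Group G] [Fintype G] (H : Subgroup G) [H.Normal]
    (hnontriv : H ≠ ⊥) (hproper : H ≠ ⊤) :
    nsbPowerGraph G H = ⊤ ↔
      (IsCyclic (G ⧸ H) ∧ ∃ p : ℕ, p.Prime ∧ IsPGroup p (G ⧸ H)) :=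
  statement_2_general H
end

section
/- Let p be a prime and let G be a finite p-group of exponent p^2 containing exactly one cyclic subgroup of order p^2. Then: (i) if p = 2, G is isomorphic to the cyclic group Z_4 or to the dihedral group D_8 of order 8; (ii) if p > 2, G is isomorphic to the cyclic group Z_{p^2}. -/
/-!
Let `g` generate the unique cyclic subgroup `C` of order `p²`. As the exponent is `p²`, every `x`
with `x ^ p ≠ 1` has order `p²`, so `⟨x⟩ = C`: everything outside `C` has order `p`.

For odd `p`, an element `z ∉ C` conjugates `g` to `g ^ k` with `k ^ p ≡ 1 [ZMOD p²]`, so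
`k ≡ 1 [ZMOD p]` by Fermat. Then `c = g ^ (k - 1) ∈ ⟨g ^ p⟩` has order dividing `p`, commutes
with `g` and `z`, and `z * g = g * c * z`, whence
`(g * z) ^ p = g ^ p * c ^ (p.choose 2) * z ^ p = g ^ p ≠ 1` because `p ∣ p.choose 2`.
So `g * z ∈ C`, i.e. `z ∈ C`, and `G = C`.

For `p = 2`, each `z ∉ C` inverts `g`, since `z` and `z * g` both square to `1`. Hence the product
of two elements outside `C` centralises `g` and lies in `C`, so `C` has index at most `2` and any
`s ∉ C` makes `(g, s)` a dihedral pair of generators of `G ≅ D₈`.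
-/

section

variable {G : Type*} [Group G] {g z c : G}

theorem pow_mul_of_mul_eq_mul_mul (hcz : Commute c z) (h : z * g = g * c * z) :
    ∀ n : ℕ, z ^ n * g = g * c ^ n * z ^ n
  | 0 => by simp
  | n + 1 => calc
      z ^ (n + 1) * g = z * g * c ^ n * z ^ n := by
        rw [pow_succ', mul_assoc, pow_mul_of_mul_eq_mul_mul hcz h n]
        simp only [mul_assoc]
      _ = g * c * (z * c ^ n) * z ^ n := by rw [h]; simp only [mul_assoc]
      _ = g * c ^ (n + 1) * z ^ (n + 1) := by
        rw [((hcz.pow_left n).eq).symm, pow_succ', pow_succ']; simp only [mul_assoc]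

theorem mul_pow_of_mul_eq_mul_mul (hcg : Commute c g) (hcz : Commute c z) (h : z * g = g * c * z) :
    ∀ n : ℕ, (g * z) ^ n = g ^ n * c ^ n.choose 2 * z ^ n
  | 0 => by simp
  | n + 1 => calc
      (g * z) ^ (n + 1) = g ^ n * c ^ n.choose 2 * (z ^ n * g) * z := by
        rw [pow_succ, mul_pow_of_mul_eq_mul_mul hcg hcz h n]; simp only [mul_assoc]
      _ = g ^ n * (c ^ n.choose 2 * g) * c ^ n * (z ^ n * z) := by
        rw [pow_mul_of_mul_eq_mul_mul hcz h n]; simp only [mul_assoc]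
      _ = g ^ (n + 1) * c ^ (n + 1).choose 2 * z ^ (n + 1) := by
        rw [(hcg.pow_left _).eq, Nat.choose_succ_succ', Nat.choose_one_right, pow_succ, pow_succ,
          add_comm n, pow_add]
        simp only [mul_assoc]

theorem conj_pow_eq_zpow_pow {k : ℤ} (h : z * g * z⁻¹ = g ^ k) :
    ∀ n : ℕ, z ^ n * g * (z ^ n)⁻¹ = g ^ (k ^ n)
  | 0 => by simp
  | n + 1 => calc
      z ^ (n + 1) * g * (z ^ (n + 1))⁻¹ = z * (z ^ n * g * (z ^ n)⁻¹) * z⁻¹ := by group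
      _ = g ^ (k ^ (n + 1)) := by
        rw [conj_pow_eq_zpow_pow h n, ← conj_zpow, h, ← zpow_mul, pow_succ']

theorem prime_dvd_sub_one_of_conj_eq_zpow {p : ℕ} (hp : p.Prime) (hpg : p ∣ orderOf g)
    (hzp : z ^ p = 1) {k : ℤ} (hk : z * g * z⁻¹ = g ^ k) : (p : ℤ) ∣ k - 1 := by
  have hkp : g ^ (k ^ p) = g ^ (1 : ℤ) := by
    rw [← conj_pow_eq_zpow_pow hk p, hzp]; simp
  rw [zpow_eq_zpow_iff_modEq] at hkp
  have hk1 : k ^ p ≡ 1 [ZMOD p] := hkp.of_dvd (Int.natCast_dvd_natCast.mpr hpg)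
  exact ((Int.ModEq.pow_prime_eq_self hp k).symm.trans hk1).symm.dvd

theorem mem_zpowers_of_forall_pow_ne_one_mem {p : ℕ} (hp : p.Prime) (hp2 : p ≠ 2)
    (hg : orderOf g = p ^ 2) (hC : ∀ x : G, x ^ p ≠ 1 → x ∈ Subgroup.zpowers g) (z : G) :
    z ∈ Subgroup.zpowers g := by
  have hgp : g ^ p ≠ 1 :=
    pow_ne_one_of_lt_orderOf hp.ne_zero (hg ▸ lt_self_pow₀ hp.one_lt one_lt_two)
  have hgpp : (g ^ p) ^ p = 1 := by rw [← pow_mul, ← sq, ← hg, pow_orderOf_eq_one]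
  by_contra hz
  have hzp : z ^ p = 1 := not_imp_comm.mp (hC z) hz
  obtain ⟨k, hk⟩ := Subgroup.mem_zpowers_iff.mp <|
    hC (z * g * z⁻¹) (by rwa [conj_pow, Ne, conj_eq_one_iff])
  obtain ⟨t, ht⟩ :=
    prime_dvd_sub_one_of_conj_eq_zpow hp (hg ▸ dvd_pow_self p two_ne_zero) hzp hk.symm
  set c := (g ^ p) ^ t
  have hcp : c ^ p = 1 := by
    rw [← zpow_natCast, ← zpow_mul, mul_comm, zpow_mul, zpow_natCast, hgpp, one_zpow]
  have hconj : z * g * z⁻¹ = g * c := by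
    rw [← hk, eq_add_of_sub_eq' ht, zpow_add, zpow_one, zpow_mul, zpow_natCast]
  have hcg : Commute c g := ((Commute.refl g).pow_left p).zpow_left t
  have hzgp : Commute z (g ^ p) := by
    rw [commute_iff_eq, ← mul_inv_eq_iff_eq_mul, ← conj_pow, hconj, hcg.symm.mul_pow, hcp, mul_one]
  have hcz : Commute c z := (hzgp.zpow_right t).symm
  have hgz : (g * z) ^ p = g ^ p := by
    have hchoose : c ^ p.choose 2 = 1 := by
      obtain ⟨m, hm⟩ := hp.dvd_choose_self two_ne_zero (lt_of_le_of_ne hp.two_le (Ne.symm hp2))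
      rw [hm, pow_mul, hcp, one_pow]
    rw [mul_pow_of_mul_eq_mul_mul hcg hcz (mul_inv_eq_iff_eq_mul.mp hconj) p, hchoose, hzp,
      mul_one, mul_one]
  exact hz ((Subgroup.mul_mem_cancel_left _ (Subgroup.mem_zpowers g)).mp
    (hC _ (hgz ▸ hgp)))

theorem conj_eq_inv_of_notMem_zpowers (hC : ∀ x : G, x ^ 2 ≠ 1 → x ∈ Subgroup.zpowers g)
    (hz : z ∉ Subgroup.zpowers g) : z * g * z⁻¹ = g⁻¹ := by
  have hz2 : z * z = 1 := by rw [← sq]; exact not_imp_comm.mp (hC z) hz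
  have hzg2 : z * g * (z * g) = 1 := by
    rw [← sq]
    refine not_imp_comm.mp (hC _) fun h => hz ?_
    exact (Subgroup.mul_mem_cancel_right _ (Subgroup.mem_zpowers g)).mp h
  rw [inv_eq_of_mul_eq_one_right hz2]
  exact eq_inv_of_mul_eq_one_left (by rwa [← mul_assoc] at hzg2)

theorem mul_mem_zpowers_of_notMem_zpowers (hC : ∀ x : G, x ^ 2 ≠ 1 → x ∈ Subgroup.zpowers g)
    (hg : g ^ 2 ≠ 1) {u v : G} (hu : u ∉ Subgroup.zpowers g) (hv : v ∉ Subgroup.zpowers g) :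
    u * v ∈ Subgroup.zpowers g := by
  by_contra huv
  have hinv := conj_eq_inv_of_notMem_zpowers hC huv
  have hself : u * v * g * (u * v)⁻¹ = g := by
    rw [show u * v * g * (u * v)⁻¹ = u * (v * g * v⁻¹) * u⁻¹ by group,
      conj_eq_inv_of_notMem_zpowers hC hv, ← conj_inv, conj_eq_inv_of_notMem_zpowers hC hu,
      inv_inv]
  exact hg (by rw [sq, mul_eq_one_iff_eq_inv, ← hinv, hself])

end

section Dihedral

variable {G : Type*} [Group G] {n : ℕ} [NeZero n] {r s : G}

theorem pow_val_add (hr : r ^ n = 1) (i j : ZMod n) : r ^ (i + j).val = r ^ i.val * r ^ j.val := by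
  rw [ZMod.val_add, ← pow_eq_pow_mod _ hr, pow_add]

theorem pow_val_sub (hr : r ^ n = 1) (i j : ZMod n) :
    r ^ (j - i).val = (r ^ i.val)⁻¹ * r ^ j.val := by
  rw [eq_inv_mul_iff_mul_eq, ← pow_val_add hr, add_sub_cancel]

theorem pow_mul_eq_mul_inv_pow (hs : s * s = 1) (hsr : s * r * s⁻¹ = r⁻¹) (m : ℕ) :
    r ^ m * s = s * (r ^ m)⁻¹ := by
  rw [← inv_pow, ← hsr, conj_pow, inv_eq_of_mul_eq_one_right hs, ← mul_assoc, ← mul_assoc, hs,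
    one_mul]

def dihedralGroupHom (hr : r ^ n = 1) (hs : s * s = 1) (hsr : s * r * s⁻¹ = r⁻¹) :
    DihedralGroup n →* G :=
  MonoidHom.mk'
    (fun
      | .r i => r ^ i.val
      | .sr i => s * r ^ i.val)
    (by
      rintro (i | i) (j | j)
      · exact pow_val_add hr i j
      · show s * r ^ (j - i).val = r ^ i.val * (s * r ^ j.val)
        rw [pow_val_sub hr, ← mul_assoc (r ^ i.val), pow_mul_eq_mul_inv_pow hs hsr, mul_assoc]
      · show s * r ^ (i + j).val = s * r ^ i.val * r ^ j.val
        rw [pow_val_add hr, mul_assoc]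
      · show r ^ (j - i).val = s * r ^ i.val * (s * r ^ j.val)
        rw [pow_val_sub hr, mul_assoc, ← mul_assoc (r ^ i.val), pow_mul_eq_mul_inv_pow hs hsr,
          ← mul_assoc, ← mul_assoc, hs, one_mul])

theorem dihedralGroupHom_bijective (hr : orderOf r = n) (hs : s * s = 1)
    (hsr : s * r * s⁻¹ = r⁻¹) (hsC : s ∉ Subgroup.zpowers r)
    (hgen : ∀ y ∉ Subgroup.zpowers r, s * y ∈ Subgroup.zpowers r) :
    Function.Bijective (dihedralGroupHom (orderOf_dvd_iff_pow_eq_one.mp hr.dvd) hs hsr) := by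
  have hfin : IsOfFinOrder r := orderOf_pos_iff.mp (hr ▸ Nat.pos_of_neZero n)
  have hpow : ∀ y ∈ Subgroup.zpowers r, ∃ i : ZMod n, r ^ i.val = y := fun y hy => by
    obtain ⟨m, rfl⟩ := hfin.mem_powers_iff_mem_zpowers.mpr hy
    exact ⟨m, by rw [ZMod.val_natCast, ← pow_eq_pow_mod _ (orderOf_dvd_iff_pow_eq_one.mp hr.dvd)]⟩
  refine ⟨(injective_iff_map_eq_one _).mpr ?_, fun y => ?_⟩
  · rintro (i | i) h
    · change r ^ i.val = 1 at h
      have hi : i.val = 0 :=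
        Nat.eq_zero_of_dvd_of_lt (hr.symm.dvd.trans (orderOf_dvd_of_pow_eq_one h)) (ZMod.val_lt i)
      rw [(ZMod.val_eq_zero i).mp hi, DihedralGroup.r_zero]
    · change s * r ^ i.val = 1 at h
      refine absurd ?_ hsC
      rw [eq_inv_of_mul_eq_one_left h]
      exact Subgroup.inv_mem _ (Subgroup.npow_mem_zpowers r i.val)
  · by_cases hy : y ∈ Subgroup.zpowers r
    · obtain ⟨i, hi⟩ := hpow y hy
      exact ⟨.r i, hi⟩
    · obtain ⟨i, hi⟩ := hpow _ (hgen y hy)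
      refine ⟨.sr i, ?_⟩
      show s * r ^ i.val = y
      rw [hi, ← mul_assoc, hs, one_mul]

end Dihedral

theorem nonempty_mulEquiv_zmod_orderOf {G : Type*} [Group G] {g : G}
    (hall : ∀ x, x ∈ Subgroup.zpowers g) : Nonempty (G ≃* Multiplicative (ZMod (orderOf g))) :=
  ⟨(zmodMulEquivOfGenerator hall (orderOf_eq_card_of_forall_mem_zpowers hall).symm).symm⟩

theorem mem_zpowers_of_pow_ne_one {G : Type*} [Group G] {p : ℕ} (hp : p.Prime)
    (hexp : Monoid.exponent G = p ^ 2)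
    (huniq : ∃! K : Subgroup G, IsCyclic K ∧ Nat.card K = p ^ 2) {g : G} (hg : orderOf g = p ^ 2)
    {x : G} (hx : x ^ p ≠ 1) : x ∈ Subgroup.zpowers g := by
  have := Fact.mk hp
  obtain ⟨C, -, hCuniq⟩ := huniq
  have hzpowers : ∀ y : G, orderOf y = p ^ 2 → Subgroup.zpowers y = C := fun y hy =>
    hCuniq _ ⟨inferInstance, by rw [Nat.card_zpowers, hy]⟩
  have hx2 : orderOf x = p ^ 2 :=
    orderOf_eq_prime_pow (by rwa [pow_one]) (hexp ▸ Monoid.pow_exponent_eq_one x)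
  rw [hzpowers g hg, ← hzpowers x hx2]
  exact Subgroup.mem_zpowers x

theorem statement_3_general {G : Type*} [Group G] (p : ℕ) (hp : p.Prime)
    (hexp : Monoid.exponent G = p ^ 2)
    (huniq : ∃! K : Subgroup G, IsCyclic ↥K ∧ Nat.card ↥K = p ^ 2) :
    (p = 2 → (Nonempty (G ≃* Multiplicative (ZMod 4)) ∨ Nonempty (G ≃* DihedralGroup 4))) ∧
    (2 < p → Nonempty (G ≃* Multiplicative (ZMod (p ^ 2)))) := by
  obtain ⟨g, hg⟩ : ∃ g : G, orderOf g = p ^ 2 := by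
    simpa [hexp, hp.factorization_self] using hp.exists_orderOf_eq_pow_factorization_exponent G
  have hC : ∀ x : G, x ^ p ≠ 1 → x ∈ Subgroup.zpowers g := fun x =>
    mem_zpowers_of_pow_ne_one hp hexp huniq hg
  refine ⟨fun hp2 => ?_, fun hp2 => ?_⟩
  · subst hp2
    norm_num at hg
    by_cases hall : ∀ x, x ∈ Subgroup.zpowers g
    · exact Or.inl (hg ▸ nonempty_mulEquiv_zmod_orderOf hall)
    push Not at hall
    obtain ⟨s, hs⟩ := hall
    have hg2 : g ^ 2 ≠ 1 := pow_ne_one_of_lt_orderOf two_ne_zero (by omega)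
    have hs2 : s * s = 1 := by rw [← sq]; exact not_imp_comm.mp (hC s) hs
    have hbij := dihedralGroupHom_bijective hg hs2 (conj_eq_inv_of_notMem_zpowers hC hs) hs
      fun y hy => mul_mem_zpowers_of_notMem_zpowers hC hg2 hs hy
    exact Or.inr ⟨(MulEquiv.ofBijective _ hbij).symm⟩
  · exact hg ▸ nonempty_mulEquiv_zmod_orderOf
      (mem_zpowers_of_forall_pow_ne_one_mem hp (by omega) hg hC)

/-- A finite `p`-group of exponent `p²` with exactly one cyclic subgroup of
order `p²` is `Z₄` or `D₈` when `p = 2`, and `Z_{p²}` when `p > 2`. -/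
theorem statement_3 {G : Type*} [Group G] [Fintype G] (p : ℕ) (hp : p.Prime)
    (hpG : IsPGroup p G) (hexp : Monoid.exponent G = p ^ 2)
    (huniq : ∃! K : Subgroup G, IsCyclic ↥K ∧ Nat.card ↥K = p ^ 2) :
    (p = 2 → (Nonempty (G ≃* Multiplicative (ZMod 4)) ∨ Nonempty (G ≃* DihedralGroup 4))) ∧
    (2 < p → Nonempty (G ≃* Multiplicative (ZMod (p ^ 2)))) :=
  statement_3_general p hp hexp huniq
end

section
/- Let G be a finite group such that every element of G has order belonging to {1, 2, 3, 4}, and suppose G has a unique cyclic subgroup of order 3. Then G is isomorphic to the cyclic group Z_3 or to the symmetric group S_3. -/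
/-!
Let `K = ⟨g⟩` be the unique subgroup of order 3: it is normal and contains every element of
order 3. An element of order 2 or 4 commuting with `g` would give an element of order 6, so `K`
is its own centralizer and `G ⧸ K` embeds in `Aut K ≅ ℤ/2`, whence `|G| = 3` or `|G| = 6`. In the
second case a subgroup `⟨x⟩` of order 2 cannot be normal (it would be central), so `G` acts
faithfully on the three cosets of `⟨x⟩`, which identifies `G` with `S₃`.
-/

namespace Subgroup

variable {G : Type*} [Group G]

theorem ker_conjNormal (K : Subgroup G) [K.Normal] :
    (MulAut.conjNormal : G →* MulAut K).ker = centralizer (K : Set G) := by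
  ext x
  simp [MonoidHom.mem_ker, MulEquiv.ext_iff, Subtype.ext_iff, mem_centralizer_iff,
    eq_mul_inv_iff_mul_eq, eq_comm]

theorem index_centralizer_dvd_card_mulAut (K : Subgroup G) [K.Normal] :
    (centralizer (K : Set G)).index ∣ Nat.card (MulAut K) := by
  rw [← ker_conjNormal, index_ker]
  exact card_subgroup_dvd_card _

theorem index_centralizer_dvd_totient (K : Subgroup G) [K.Normal] [Finite K] [IsCyclic K] :
    (centralizer (K : Set G)).index ∣ (Nat.card K).totient :=
  IsCyclic.card_mulAut (G := K) ▸ index_centralizer_dvd_card_mulAut K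

theorem le_center_of_card_eq_two (N : Subgroup G) [N.Normal] (hN : Nat.card N = 2) :
    N ≤ center G := by
  have : Finite N := Nat.finite_of_card_ne_zero (by omega)
  have : Fact (Nat.card N).Prime := ⟨hN ▸ Nat.prime_two⟩
  have : IsCyclic N := isCyclic_of_prime_card rfl
  have hidx : (centralizer (N : Set G)).index = 1 := by
    simpa [hN] using index_centralizer_dvd_totient N
  rw [← centralizer_univ, ← coe_top, le_centralizer_iff, ← index_eq_one.mp hidx]

theorem normalCore_eq_bot_of_card_prime {H : Subgroup G} [Finite H] (hp : (Nat.card H).Prime)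
    (hH : ¬ H.Normal) : H.normalCore = ⊥ := by
  rcases hp.eq_one_or_self_of_dvd _ (card_dvd_of_le H.normalCore_le) with h | h
  · exact card_eq_one.mp h
  · exact absurd (eq_of_le_of_card_ge H.normalCore_le h.ge ▸ H.normalCore_normal) hH

theorem nonempty_mulEquiv_perm_of_normalCore_eq_bot [Finite G] {H : Subgroup G}
    (hH : H.normalCore = ⊥) (hG : Nat.card G = H.index.factorial) :
    Nonempty (G ≃* Equiv.Perm (Fin H.index)) := by
  let e : G ⧸ H ≃ Fin H.index := Finite.equivFin _
  let ψ : G →* Equiv.Perm (Fin H.index) :=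
    e.permCongrHom.toMonoidHom.comp (MulAction.toPermHom G (G ⧸ H))
  have hψ : Function.Injective ψ := by
    refine e.permCongrHom.injective.comp ?_
    rw [← MonoidHom.ker_eq_bot_iff, ← normalCore_eq_ker, hH]
  refine ⟨MulEquiv.ofBijective ψ ((Nat.bijective_iff_injective_and_card ψ).mpr ⟨hψ, ?_⟩)⟩
  rw [hG, Nat.card_perm, Nat.card_eq_fintype_card, Fintype.card_fin]

theorem nonempty_mulEquiv_perm_three_of_card_eq_six [Finite G] (hG : Nat.card G = 6)
    {K : Subgroup G} (hK : Nat.card K = 3) (hCK : centralizer (K : Set G) ≤ K) :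
    Nonempty (G ≃* Equiv.Perm (Fin 3)) := by
  obtain ⟨x, hx⟩ := exists_prime_orderOf_dvd_card' (G := G) 2 ⟨3, hG⟩
  have hxK : x ∉ K := fun hxK => by
    have := K.orderOf_dvd_natCard hxK
    rw [hx, hK] at this
    omega
  have hH : Nat.card (zpowers x) = 2 := by rw [Nat.card_zpowers, hx]
  have hHn : ¬ (zpowers x).Normal := fun _ =>
    hxK (hCK (center_le_centralizer _ (le_center_of_card_eq_two _ hH (mem_zpowers x))))
  have hHidx : (zpowers x).index = 3 := by
    have := (zpowers x).index_mul_card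
    rw [hH, hG] at this
    omega
  have hS3 := nonempty_mulEquiv_perm_of_normalCore_eq_bot
    (normalCore_eq_bot_of_card_prime (hH ▸ Nat.prime_two) hHn) (by rw [hHidx, hG]; rfl)
  rwa [hHidx] at hS3

theorem zpowers_eq_of_orderOf_eq {K : Subgroup G} {n : ℕ}
    (hK : ∀ L : Subgroup G, IsCyclic L → Nat.card L = n → L = K) {x : G} (hx : orderOf x = n) :
    zpowers x = K :=
  hK _ inferInstance (by rw [Nat.card_zpowers, hx])

theorem normal_of_forall_isCyclic_card_eq {K : Subgroup G} [IsCyclic K] {n : ℕ}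
    (hK : ∀ L : Subgroup G, IsCyclic L → Nat.card L = n → L = K) (hKn : Nat.card K = n) :
    K.Normal := by
  refine normal_iff_map_conj_eq.mpr fun g => hK _ ?_ ?_
  · exact isCyclic_of_surjective _ (K.equivMapOfInjective _ (MulAut.conj g).injective).surjective
  · rw [card_map_of_injective (MulAut.conj g).injective, hKn]

end Subgroup

section OrdersAtMostFour

open Subgroup

variable {G : Type*} [Group G]

theorem orderOf_ne_two_of_commute (horder : ∀ x : G, orderOf x ∈ ({1, 2, 3, 4} : Set ℕ))
    {x y : G} (hxy : Commute x y) (hy : orderOf y = 3) : orderOf x ≠ 2 := by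
  intro hx
  have hxy6 := hxy.orderOf_mul_eq_mul_orderOf_of_coprime (by rw [hx, hy]; norm_num)
  have := horder (x * y)
  rw [hxy6, hx, hy] at this
  norm_num at this

theorem centralizer_le_of_unique_cyclic_three
    (horder : ∀ x : G, orderOf x ∈ ({1, 2, 3, 4} : Set ℕ)) {K : Subgroup G}
    (hK : ∀ L : Subgroup G, IsCyclic L → Nat.card L = 3 → L = K) {g : G} (hg : orderOf g = 3) :
    centralizer (K : Set G) ≤ K := by
  intro x hx
  have hxg : Commute x g :=
    (mem_centralizer_iff.mp hx g (zpowers_eq_of_orderOf_eq hK hg ▸ mem_zpowers g)).symm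
  rcases horder x with h | h | h | h
  · rw [orderOf_eq_one_iff.mp h]
    exact K.one_mem
  · exact absurd h (orderOf_ne_two_of_commute horder hxg hg)
  · exact zpowers_eq_of_orderOf_eq hK h ▸ mem_zpowers x
  · have hx2 : orderOf (x ^ 2) = 2 := by rw [orderOf_pow' _ two_ne_zero, h]; rfl
    exact absurd hx2 (orderOf_ne_two_of_commute horder (hxg.pow_left 2) hg)

end OrdersAtMostFour

open Subgroup in
/-- If every element of a finite group `G` has order in `{1,2,3,4}` and `G`
has a unique cyclic subgroup of order `3`, then `G ≅ Z₃` or `G ≅ S₃`. -/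
theorem statement_4 {G : Type*} [Group G] [Fintype G]
    (horder : ∀ x : G, orderOf x ∈ ({1, 2, 3, 4} : Set ℕ))
    (huniq : ∃! K : Subgroup G, IsCyclic ↥K ∧ Nat.card ↥K = 3) :
    Nonempty (G ≃* Multiplicative (ZMod 3)) ∨ Nonempty (G ≃* Equiv.Perm (Fin 3)) := by
  obtain ⟨K, ⟨hKcyc, hK3⟩, hKuniq⟩ := huniq
  have hK : ∀ L : Subgroup G, IsCyclic L → Nat.card L = 3 → L = K :=
    fun L hL hL3 => hKuniq L ⟨hL, hL3⟩
  have : K.Normal := normal_of_forall_isCyclic_card_eq hK hK3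
  obtain ⟨g, hg⟩ := exists_prime_orderOf_dvd_card' 3 (hK3 ▸ card_subgroup_dvd_card K)
  have hCK : centralizer (K : Set G) = K :=
    le_antisymm (centralizer_le_of_unique_cyclic_three horder hK hg) (le_centralizer K)
  have hidx : K.index ∣ 2 := by
    simpa [hCK, hK3, Nat.totient_prime Nat.prime_three] using index_centralizer_dvd_totient K
  have hcard : K.index * 3 = Nat.card G := hK3 ▸ K.index_mul_card
  rcases Nat.prime_two.eq_one_or_self_of_dvd _ hidx with h1 | h2
  · exact .inl ⟨mulEquivOfPrimeCardEq (p := 3) (by omega) (by simp)⟩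
  · exact .inr (nonempty_mulEquiv_perm_three_of_card_eq_six (by omega) hK3 hCK.le)
end

section
/- Let G be a finite group, H a proper normal subgroup of G, and let aH and bH be two distinct cosets of H, both different from H, such that aH and bH are adjacent in the power graph P(G/H). Then the set aH ∪ bH ∪ {e} is a clique in the normal subgroup based power graph Γ_H(G); that is, the subgraph of Γ_H(G) induced by aH ∪ bH ∪ {e} is a complete graph on 2|H| + 1 vertices. -/
open scoped Pointwise

/-!
Adjacency in `Γ_H(G)` depends only on cosets, and two distinct elements of the same coset are
always adjacent (take `m = 1`). The cosets of the elements of `aH ∪ bH ∪ {e}` lie in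
`{aH, bH, H}`, which is a triangle in `P(G/H)` because `H = (xH)^{o(xH)}` for every coset `xH`.
The count `2|H| + 1` holds since `aH`, `bH` and `{e}` are pairwise disjoint.
-/

namespace QuotientGroup

variable {G : Type*} [Group G] {H : Subgroup G}

theorem mk_eq_of_mem_leftCoset {g x : G} (hx : x ∈ g • (H : Set G)) : (x : G ⧸ H) = g := by
  rwa [← eq_class_eq_leftCoset] at hx

theorem notMem_of_mem_leftCoset {g x : G} (hg : g ∉ H) (hx : x ∈ g • (H : Set G)) : x ∉ H :=
  fun hxH ↦ hg (by simpa using H.mul_mem hxH (H.inv_mem ((mem_leftCoset_iff g).1 hx)))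

theorem one_notMem_leftCoset {g : G} (hg : g ∉ H) : (1 : G) ∉ g • (H : Set G) :=
  fun h ↦ notMem_of_mem_leftCoset hg h H.one_mem

theorem disjoint_leftCoset_of_mk_ne {a b : G} (h : (a : G ⧸ H) ≠ b) :
    Disjoint (a • (H : Set G)) (b • (H : Set G)) :=
  Set.disjoint_left.2 fun _ hxa hxb ↦
    h ((mk_eq_of_mem_leftCoset hxa).symm.trans (mk_eq_of_mem_leftCoset hxb))

end QuotientGroup

section powerGraph

variable {K : Type*} [Group K]

theorem powerGraph_adj_one [Finite K] {k : K} (hk : k ≠ 1) : (powerGraph K).Adj 1 k :=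
  ⟨hk.symm, Or.inl ⟨orderOf k, orderOf_pos k, (pow_orderOf_eq_one k).symm⟩⟩

theorem powerGraph_isClique_triple_one [Finite K] {x y : K} (hx : x ≠ 1) (hy : y ≠ 1)
    (hxy : (powerGraph K).Adj x y) : (powerGraph K).IsClique {x, y, 1} := by
  refine SimpleGraph.isClique_insert.2
    ⟨SimpleGraph.isClique_pair.2 fun _ ↦ (powerGraph_adj_one hy).symm, ?_⟩
  rintro z (rfl | rfl) -
  · exact hxy
  · exact (powerGraph_adj_one hx).symm

end powerGraph

section nsbPowerGraph

variable {G : Type*} [Group G] {H : Subgroup G}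

theorem nsbPowerGraph_adj_of_mk [H.Normal] {x y : nsbVertexSet H} (hne : (x : G) ≠ y)
    (h : ((x : G) : G ⧸ H) = (y : G) ∨ (powerGraph (G ⧸ H)).Adj (x : G) (y : G)) :
    (nsbPowerGraph G H).Adj x y := by
  refine ⟨hne, ?_⟩
  rcases h with h | ⟨-, h⟩
  · exact Or.inl ⟨1, one_pos, by rwa [pow_one]⟩
  · simpa only [QuotientGroup.mk_pow] using h

theorem isClique_nsbPowerGraph_of_isClique_powerGraph [H.Normal] {S : Set (nsbVertexSet H)}
    {T : Set (G ⧸ H)} (hT : (powerGraph (G ⧸ H)).IsClique T)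
    (hS : ∀ v ∈ S, ((v : G) : G ⧸ H) ∈ T) : (nsbPowerGraph G H).IsClique S :=
  fun x hx y hy hxy ↦ nsbPowerGraph_adj_of_mk (Subtype.coe_ne_coe.2 hxy)
    (or_iff_not_imp_left.2 (hT (hS x hx) (hS y hy)))

theorem leftCoset_subset_nsbVertexSet {g : G} (hg : g ∉ H) :
    g • (H : Set G) ⊆ nsbVertexSet H :=
  fun _ hx ↦ Or.inl (QuotientGroup.notMem_of_mem_leftCoset hg hx)

theorem ncard_nsbVertexSet_preimage {s : Set G} (hs : s ⊆ nsbVertexSet H) :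
    {v : nsbVertexSet H | (v : G) ∈ s}.ncard = s.ncard :=
  Set.ncard_preimage_of_injective_subset_range Subtype.val_injective (by simpa using hs)

end nsbPowerGraph

theorem statement_8_general {G : Type*} [Group G] [Fintype G] (H : Subgroup G) [H.Normal]
    (a b : G) (ha : a ∉ H) (hb : b ∉ H)
    (hcosets : (QuotientGroup.mk a : G ⧸ H) ≠ QuotientGroup.mk b)
    (hadj : (powerGraph (G ⧸ H)).Adj (QuotientGroup.mk a) (QuotientGroup.mk b)) :
    (nsbPowerGraph G H).IsClique
      {v : nsbVertexSet H |
        (v : G) ∈ a • (H : Set G) ∨ (v : G) ∈ b • (H : Set G) ∨ (v : G) = 1} ∧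
    ({v : nsbVertexSet H |
        (v : G) ∈ a • (H : Set G) ∨ (v : G) ∈ b • (H : Set G) ∨ (v : G) = 1}).ncard
      = 2 * Nat.card H + 1 := by
  have hne_one {g : G} (hg : g ∉ H) : (g : G ⧸ H) ≠ 1 := (QuotientGroup.eq_one_iff g).not.2 hg
  constructor
  · refine isClique_nsbPowerGraph_of_isClique_powerGraph
      (powerGraph_isClique_triple_one (hne_one ha) (hne_one hb) hadj) ?_
    rintro v (hv | hv | hv)
    · simp [QuotientGroup.mk_eq_of_mem_leftCoset hv]
    · simp [QuotientGroup.mk_eq_of_mem_leftCoset hv]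
    · simp [hv]
  · have hsub : a • (H : Set G) ∪ (b • (H : Set G) ∪ {1}) ⊆ nsbVertexSet H :=
      Set.union_subset (leftCoset_subset_nsbVertexSet ha)
        (Set.union_subset (leftCoset_subset_nsbVertexSet hb) Set.subset_union_right)
    have hdisj_b : Disjoint (b • (H : Set G)) {1} :=
      Set.disjoint_singleton_right.2 (QuotientGroup.one_notMem_leftCoset hb)
    have hdisj_a : Disjoint (a • (H : Set G)) (b • (H : Set G) ∪ {1}) :=
      Set.disjoint_union_right.2 ⟨QuotientGroup.disjoint_leftCoset_of_mk_ne hcosets,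
        Set.disjoint_singleton_right.2 (QuotientGroup.one_notMem_leftCoset ha)⟩
    refine (ncard_nsbVertexSet_preimage hsub).trans ?_
    rw [Set.ncard_union_eq hdisj_a, Set.ncard_union_eq hdisj_b,
      Set.ncard_smul_set, Set.ncard_smul_set, Set.ncard_singleton, ← Nat.card_coe_set_eq,
      SetLike.coe_sort_coe]
    ring

/-- If `aH` and `bH` are distinct cosets `≠ H` adjacent in the power graph
of `G/H`, then `aH ∪ bH ∪ {e}` is a clique of `2|H| + 1` vertices in `Γ_H(G)`. -/
theorem statement_8 {G : Type*} [Group G] [Fintype G] (H : Subgroup G) [H.Normal]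
    (hproper : H ≠ ⊤) (a b : G) (ha : a ∉ H) (hb : b ∉ H)
    (hcosets : (QuotientGroup.mk a : G ⧸ H) ≠ QuotientGroup.mk b)
    (hadj : (powerGraph (G ⧸ H)).Adj (QuotientGroup.mk a) (QuotientGroup.mk b)) :
    (nsbPowerGraph G H).IsClique
      {v : nsbVertexSet H |
        (v : G) ∈ a • (H : Set G) ∨ (v : G) ∈ b • (H : Set G) ∨ (v : G) = 1} ∧
    ({v : nsbVertexSet H |
        (v : G) ∈ a • (H : Set G) ∨ (v : G) ∈ b • (H : Set G) ∨ (v : G) = 1}).ncard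
      = 2 * Nat.card H + 1 :=
  statement_8_general H a b ha hb hcosets hadj
end

section
/- Let G be a finite group and H a normal subgroup of G with |H| = 2 such that the quotient group G/H is isomorphic to the cyclic group Z_3. Then the normal subgroup based power graph Γ_H(G) is isomorphic to the complete graph K_5. -/
/-! Every nontrivial element of the quotient `G ⧸ H ≅ Z₃` generates it, so any two cosets are
positive powers of one another and `Γ_H(G)` is complete; it has `|G| - |H| + 1 = 3·2 - 2 + 1 = 5`
vertices. -/

theorem exists_pos_pow_eq_or_exists_pos_pow_eq_of_prime_card {K : Type*} [Group K] {p : ℕ}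
    [hp : Fact p.Prime] (h : Nat.card K = p) (x y : K) :
    (∃ m : ℕ, 0 < m ∧ x = y ^ m) ∨ (∃ n : ℕ, 0 < n ∧ y = x ^ n) := by
  by_cases hy : y = 1
  · exact Or.inr ⟨p, hp.out.pos, by rw [hy, ← h, pow_card_eq_one']⟩
  · obtain ⟨n, hn⟩ := mem_powers_of_prime_card h hy (g' := x)
    refine Or.inl ⟨n + p, Nat.lt_add_left n hp.out.pos, ?_⟩
    rw [pow_add, ← h, pow_card_eq_one', mul_one, ← hn]

theorem nsbPowerGraph_eq_top_of_card_quotient_prime {G : Type*} [Group G] (H : Subgroup G)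
    [H.Normal] {p : ℕ} [Fact p.Prime] (h : Nat.card (G ⧸ H) = p) : nsbPowerGraph G H = ⊤ := by
  ext a b
  simp only [SimpleGraph.top_adj, ne_eq]
  refine ⟨fun hab => hab.1 ∘ congrArg Subtype.val, fun hab => ⟨fun h' => hab (Subtype.ext h'), ?_⟩⟩
  simpa only [QuotientGroup.mk_pow] using
    exists_pos_pow_eq_or_exists_pos_pow_eq_of_prime_card h (a : G ⧸ H) (b : G ⧸ H)

theorem nsbVertexSet_eq_insert_compl {G : Type*} [Group G] (H : Subgroup G) :
    nsbVertexSet H = insert 1 (H : Set G)ᶜ := by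
  rw [nsbVertexSet, Set.union_comm, Set.insert_eq]
  rfl

theorem card_nsbVertexSet_add_card {G : Type*} [Group G] [Finite G] (H : Subgroup G) :
    Nat.card (nsbVertexSet H) + Nat.card H = Nat.card G + 1 := by
  have hH : Nat.card H = (H : Set G).ncard := Nat.card_coe_set_eq _
  rw [Nat.card_coe_set_eq, nsbVertexSet_eq_insert_compl,
    Set.ncard_insert_of_notMem (by simp), hH,
    ← Set.ncard_add_ncard_compl (H : Set G)]
  omega

theorem nonempty_top_iso_kGraph {V : Type*} [Finite V] {n : ℕ} (h : Nat.card V = n) :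
    Nonempty ((⊤ : SimpleGraph V) ≃g kGraph n) :=
  ⟨SimpleGraph.Iso.completeGraph (Finite.equivFinOfCardEq h)⟩

theorem statement_11_general {G : Type*} [Group G] (H : Subgroup G) [H.Normal]
    (hcard : Nat.card H = 2) (hq : Nonempty (G ⧸ H ≃* Multiplicative (ZMod 3))) :
    Nonempty (nsbPowerGraph G H ≃g kGraph 5) := by
  obtain ⟨φ⟩ := hq
  have hQ : Nat.card (G ⧸ H) = 3 := by simp [Nat.card_congr φ.toEquiv]
  have hG : Nat.card G = 6 := by
    rw [H.card_eq_card_quotient_mul_card_subgroup, hQ, hcard]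
  have : Finite G := Nat.finite_of_card_ne_zero (by omega)
  have hV : Nat.card (nsbVertexSet H) = 5 := by
    have := card_nsbVertexSet_add_card H
    omega
  rw [nsbPowerGraph_eq_top_of_card_quotient_prime H hQ]
  exact nonempty_top_iso_kGraph hV

/-- If `|H| = 2` and `G/H ≅ Z₃`, then `Γ_H(G) ≅ K₅`. -/
theorem statement_11 {G : Type*} [Group G] [Fintype G] (H : Subgroup G) [H.Normal]
    (hcard : Nat.card H = 2) (hq : Nonempty (G ⧸ H ≃* Multiplicative (ZMod 3))) :
    Nonempty (nsbPowerGraph G H ≃g kGraph 5) :=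
  statement_11_general H hcard hq
end

section
/- Let G be a finite group and H a normal subgroup of G with |H| = 2 such that the quotient group G/H is isomorphic to the dihedral group D_8 of order 8. Then the normal subgroup based power graph Γ_H(G) is isomorphic to the graph K_1 ∨ (K_6 ∪ 4K_2). -/
open SimpleGraph

def IsPowerRelated {M : Type*} [Monoid M] (x y : M) : Prop :=
  (∃ m, 0 < m ∧ x = y ^ m) ∨ (∃ n, 0 < n ∧ y = x ^ n)

theorem isPowerRelated_comm {M : Type*} [Monoid M] {x y : M} :
    IsPowerRelated x y ↔ IsPowerRelated y x :=
  or_comm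

theorem isPowerRelated_map_iff {M N F : Type*} [Monoid M] [Monoid N] [FunLike F M N]
    [MonoidHomClass F M N] {f : F} (hf : Function.Injective f) {x y : M} :
    IsPowerRelated (f x) (f y) ↔ IsPowerRelated x y := by
  simp only [IsPowerRelated, ← map_pow, hf.eq_iff]

theorem exists_pos_pow_eq_iff {M : Type*} [Monoid M] {n : ℕ} (hn : 0 < n) {x y : M}
    (hy : y ^ n = 1) : (∃ m, 0 < m ∧ x = y ^ m) ↔ ∃ m < n, x = y ^ m := by
  constructor
  · rintro ⟨m, -, rfl⟩
    exact ⟨m % n, Nat.mod_lt m hn, pow_eq_pow_mod m hy⟩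
  · rintro ⟨m, -, rfl⟩
    rcases m.eq_zero_or_pos with rfl | hm
    · exact ⟨n, hn, by rw [pow_zero, hy]⟩
    · exact ⟨m, hm, rfl⟩

theorem SimpleGraph.nonempty_iso_fromRel_of_card_fiber_eq {V W L : Type*} [Finite V] [Finite W]
    (r : L → L → Prop) (c : V → L) (d : W → L)
    (h : ∀ l, Nat.card {v // c v = l} = Nat.card {w // d w = l}) :
    Nonempty (fromRel (fun u v => r (c u) (c v)) ≃g fromRel (fun u v => r (d u) (d v))) := by
  have e := fun l => (Finite.card_eq.mp (h l)).some
  refine ⟨⟨Equiv.ofFiberEquiv e, ?_⟩⟩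
  simp only [fromRel_adj, Equiv.ofFiberEquiv_map, (Equiv.ofFiberEquiv e).injective.ne_iff,
    implies_true]

section PowerGraph

variable {G : Type*} [Group G] (H : Subgroup G) [H.Normal]

theorem nsbPowerGraph_eq_fromRel :
    nsbPowerGraph G H =
      fromRel fun a b : nsbVertexSet H => IsPowerRelated (a : G ⧸ H) (b : G ⧸ H) := by
  ext a b
  rw [fromRel_adj, isPowerRelated_comm (x := (b : G ⧸ H)), or_self]
  simp only [nsbPowerGraph, IsPowerRelated, QuotientGroup.mk_pow, Ne, Subtype.ext_iff]

variable {L : Type*} (f : G ⧸ H → L) (l : L)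

theorem card_nsbVertexSet_fiber_of_ne_one (hl : ∀ q, f q = l → q ≠ 1) :
    Nat.card {v : nsbVertexSet H // f (v : G) = l} = Nat.card H * Nat.card {q // f q = l} := by
  have hmem : ∀ {g : G}, f g = l → g ∈ nsbVertexSet H := fun hg =>
    Or.inl fun hH => hl _ hg ((QuotientGroup.eq_one_iff _).mpr hH)
  calc Nat.card {v : nsbVertexSet H // f (v : G) = l}
      = Nat.card (QuotientGroup.mk ⁻¹' {q : G ⧸ H | f q = l}) :=
        Nat.card_congr (Equiv.subtypeSubtypeEquivSubtype hmem)
    _ = Nat.card H * Nat.card {q // f q = l} :=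
        (Nat.card_congr (QuotientGroup.preimageMkEquivSubgroupProdSet H _)).trans
          (Nat.card_prod _ _)

theorem card_nsbVertexSet_fiber_eq_one (hl : ∀ q, f q = l ↔ q = 1) :
    Nat.card {v : nsbVertexSet H // f (v : G) = l} = 1 := by
  refine Nat.card_eq_one_iff_unique.mpr ⟨⟨fun v w => ?_⟩, ⟨⟨⟨1, Or.inr rfl⟩, (hl 1).mpr rfl⟩⟩⟩
  have eq_one : ∀ u : {v : nsbVertexSet H // f (v : G) = l}, (u : G) = 1 := by
    rintro ⟨⟨u, hu | hu⟩, hfu⟩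
    · exact absurd ((QuotientGroup.eq_one_iff u).mp ((hl _).mp hfu)) hu
    · exact hu
  exact Subtype.ext (Subtype.ext ((eq_one v).trans (eq_one w).symm))

end PowerGraph

def SameOrNone {α : Type*} (a b : Option α) : Prop :=
  a = b ∨ a = none ∨ b = none

def dihedralFourClass : DihedralGroup 4 → Option (Option (Fin 4))
  | .r i => if i = 0 then none else some none
  | .sr i => some (some i)

theorem isPowerRelated_iff_sameOrNone (x y : DihedralGroup 4) :
    IsPowerRelated x y ↔ SameOrNone (dihedralFourClass x) (dihedralFourClass y) := by
  have hexp : ∀ z : DihedralGroup 4, z ^ 4 = 1 := by decide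
  rw [IsPowerRelated, exists_pos_pow_eq_iff four_pos (hexp y),
    exists_pos_pow_eq_iff four_pos (hexp x)]
  unfold SameOrNone
  revert x y
  decide

theorem dihedralFourClass_eq_none_iff (x : DihedralGroup 4) :
    dihedralFourClass x = none ↔ x = 1 := by
  revert x
  decide

def joinComponent (m k n : ℕ) : Fin 1 ⊕ (Fin m ⊕ Fin k × Fin n) → Option (Option (Fin k))
  | .inl _ => none
  | .inr (.inl _) => some none
  | .inr (.inr (i, _)) => some (some i)

theorem graphJoin_eq_fromRel (m k n : ℕ) :
    graphJoin (kGraph 1) ((kGraph m).sum (unionKGraph k n)) =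
      fromRel fun s t => SameOrNone (joinComponent m k n s) (joinComponent m k n t) := by
  ext (s | s | ⟨i, a⟩) (t | t | ⟨j, b⟩) <;>
    simp [graphJoin, kGraph, unionKGraph, SameOrNone, joinComponent, fromRel_adj]
  tauto

theorem card_dihedralFourClass_fiber_some (l : Option (Fin 4)) :
    2 * Nat.card {d // dihedralFourClass d = some l} =
      Nat.card {t // joinComponent 6 4 2 t = some l} := by
  simp only [Nat.card_eq_fintype_card]
  revert l
  decide

/-- If `|H| = 2` and `G/H ≅ D₈`, then `Γ_H(G) ≅ K₁ ∨ (K₆ ∪ 4K₂)`. -/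
theorem statement_13 {G : Type*} [Group G] [Fintype G] (H : Subgroup G) [H.Normal]
    (hcard : Nat.card H = 2) (hq : Nonempty (G ⧸ H ≃* DihedralGroup 4)) :
    Nonempty (nsbPowerGraph G H ≃g
      graphJoin (kGraph 1) (SimpleGraph.sum (kGraph 6) (unionKGraph 4 2))) := by
  obtain ⟨iso⟩ := hq
  set f : G ⧸ H → Option (Option (Fin 4)) := fun q => dihedralFourClass (iso q)
  have hrel : (fun a b : nsbVertexSet H => IsPowerRelated (a : G ⧸ H) (b : G ⧸ H)) =
      fun a b : nsbVertexSet H => SameOrNone (f (a : G)) (f (b : G)) := by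
    ext a b
    rw [← isPowerRelated_map_iff iso.injective, isPowerRelated_iff_sameOrNone]
  have hf_none (q : G ⧸ H) : f q = none ↔ q = 1 := by
    rw [dihedralFourClass_eq_none_iff, map_eq_one_iff _ iso.injective]
  rw [nsbPowerGraph_eq_fromRel, hrel, graphJoin_eq_fromRel]
  apply nonempty_iso_fromRel_of_card_fiber_eq
  rintro (_ | l)
  · rw [card_nsbVertexSet_fiber_eq_one H f none hf_none, Nat.card_eq_fintype_card]
    decide
  · have hl (q : G ⧸ H) (hq : f q = some l) : q ≠ 1 := fun h1 =>
      Option.some_ne_none l (hq ▸ (hf_none q).mpr h1)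
    have hfiber : Nat.card {q // f q = some l} = Nat.card {d // dihedralFourClass d = some l} :=
      Nat.card_congr (iso.toEquiv.subtypeEquiv fun _ => Iff.rfl)
    rw [card_nsbVertexSet_fiber_of_ne_one H f _ hl, hcard, hfiber]
    exact card_dihedralFourClass_fiber_some l
end

section
/- Let G be a finite group and H a normal subgroup of G with |H| = n such that the quotient group G/H is isomorphic to the Klein four-group Z_2 × Z_2. Then the normal subgroup based power graph Γ_H(G) is isomorphic to the graph K_1 ∨ 3K_n. -/
/-! Since `G ⧸ H` has exponent two, a positive power of a coset `aH` is either `aH` or `H`.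
Hence two distinct vertices of `Γ_H(G)` are adjacent exactly when one of them is `e` or
they lie in the same coset: `e` is joined to everything, and each of the three nontrivial
cosets of `H`, which has `n` elements, spans a clique. -/

namespace QuotientGroup

variable {G : Type*} [Group G] {H : Subgroup G}

theorem mk_out_mul (q : G ⧸ H) (h : H) : ((q.out * h : G) : G ⧸ H) = q := by
  rw [mk_mul_of_mem _ h.2, out_eq']

theorem out_mul_inj {q₁ q₂ : G ⧸ H} {h₁ h₂ : H} :
    q₁.out * (h₁ : G) = q₂.out * h₂ ↔ q₁ = q₂ ∧ h₁ = h₂ := by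
  refine ⟨fun h => ?_, by rintro ⟨rfl, rfl⟩; rfl⟩
  obtain rfl : q₁ = q₂ := by rw [← mk_out_mul q₁ h₁, ← mk_out_mul q₂ h₂, h]
  exact ⟨rfl, Subtype.ext (mul_left_cancel h)⟩

theorem out_mul_notMem [H.Normal] {q : G ⧸ H} (hq : q ≠ 1) (h : H) : q.out * (h : G) ∉ H := by
  rwa [← eq_one_iff, mk_out_mul]

theorem out_mul_ne_one [H.Normal] {q : G ⧸ H} (hq : q ≠ 1) (h : H) : q.out * (h : G) ≠ 1 :=
  fun h1 => out_mul_notMem hq h (h1 ▸ one_mem H)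

end QuotientGroup

section NsbPowerGraph

open QuotientGroup

variable {G : Type*} [Group G] {H : Subgroup G}

theorem eq_one_of_mem_nsbVertexSet {x : G} (hx : x ∈ nsbVertexSet H) (hxH : x ∈ H) : x = 1 :=
  hx.resolve_left (not_not_intro hxH)

variable [H.Normal]

theorem nsbPowerGraph_adj_iff_of_sq_eq_one (hsq : ∀ q : G ⧸ H, q ^ 2 = 1)
    {a b : nsbVertexSet H} : (nsbPowerGraph G H).Adj a b ↔
      (a : G) ≠ b ∧ ((a : G) = 1 ∨ (b : G) = 1 ∨ (a : G ⧸ H) = (b : G)) := by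
  have power_iff : ∀ x y : nsbVertexSet H, (∃ m : ℕ, 0 < m ∧ (x : G ⧸ H) = ((y : G) ^ m : G)) ↔
      ((x : G) = 1 ∨ (x : G ⧸ H) = (y : G)) := by
    intro x y
    constructor
    · rintro ⟨m, -, hm⟩
      rw [mk_pow, pow_eq_pow_mod m (hsq _)] at hm
      rcases Nat.mod_two_eq_zero_or_one m with h | h <;> rw [h] at hm
      · exact .inl (eq_one_of_mem_nsbVertexSet x.2 ((eq_one_iff _).mp (by simpa using hm)))
      · exact .inr (by simpa using hm)
    · rintro (hx | hx)
      · exact ⟨2, two_pos, by rw [mk_pow, hsq, hx, mk_one]⟩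
      · exact ⟨1, one_pos, by rw [pow_one, hx]⟩
  simp only [nsbPowerGraph, power_iff, eq_comm (a := ((b : G) : G ⧸ H))]
  tauto

noncomputable def nsbVertexOfCoset : Fin 1 ⊕ {q : G ⧸ H // q ≠ 1} × H → nsbVertexSet H
  | .inl _ => ⟨1, .inr rfl⟩
  | .inr (q, h) => ⟨q.1.out * h, .inl (out_mul_notMem q.2 h)⟩

theorem nsbVertexOfCoset_bijective : (nsbVertexOfCoset (H := H)).Bijective := by
  constructor
  · rintro (_ | ⟨q₁, h₁⟩) (_ | ⟨q₂, h₂⟩) h <;>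
      simp only [nsbVertexOfCoset, Subtype.ext_iff] at h
    · exact congrArg _ (Subsingleton.elim _ _)
    · exact absurd h.symm (out_mul_ne_one q₂.2 h₂)
    · exact absurd h (out_mul_ne_one q₁.2 h₁)
    · obtain ⟨hq, rfl⟩ := out_mul_inj.mp h
      rw [Subtype.ext hq]
  · rintro ⟨x, hx | rfl⟩
    · refine ⟨.inr (⟨x, by rwa [ne_eq, eq_one_iff]⟩, ⟨(x : G ⧸ H).out⁻¹ * x, ?_⟩), ?_⟩
      · exact leftRel_apply.mp (Quotient.exact (out_eq' (x : G ⧸ H)))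
      · exact Subtype.ext (mul_inv_cancel_left _ _)
    · exact ⟨.inl 0, rfl⟩

-- `boxProd ⊥ ⊤` is the disjoint union of the cliques on the nontrivial cosets, each a copy of `K_H`.
noncomputable def nsbPowerGraphIsoOfSqEqOne (hsq : ∀ q : G ⧸ H, q ^ 2 = 1) :
    graphJoin (kGraph 1)
      (SimpleGraph.boxProd (⊥ : SimpleGraph {q : G ⧸ H // q ≠ 1}) (⊤ : SimpleGraph H)) ≃g
      nsbPowerGraph G H where
  toEquiv := .ofBijective _ nsbVertexOfCoset_bijective
  map_rel_iff' {u v} := by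
    rw [Equiv.ofBijective_apply, Equiv.ofBijective_apply, nsbPowerGraph_adj_iff_of_sq_eq_one hsq]
    rcases u with _ | ⟨q₁, h₁⟩ <;> rcases v with _ | ⟨q₂, h₂⟩ <;>
      simp only [nsbVertexOfCoset, graphJoin, kGraph, SimpleGraph.top_adj, SimpleGraph.boxProd_adj,
        SimpleGraph.bot_adj, ne_eq, out_mul_inj, mk_out_mul, Subtype.ext_iff, iff_true,
        true_or, or_true, and_true, false_and, false_or]
    · simpa using Subsingleton.elim _ _
    · exact (out_mul_ne_one q₂.2 h₂).symm
    · exact out_mul_ne_one q₁.2 h₁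
    · simp only [out_mul_ne_one q₁.2, out_mul_ne_one q₂.2, false_or]
      tauto

end NsbPowerGraph

section GraphIsos

variable {α β γ δ : Type*}

def graphJoinCongr {G₁ : SimpleGraph α} {G₂ : SimpleGraph β} {H₁ : SimpleGraph γ}
    {H₂ : SimpleGraph δ} (e : G₁ ≃g G₂) (f : H₁ ≃g H₂) : graphJoin G₁ H₁ ≃g graphJoin G₂ H₂ where
  toEquiv := .sumCongr e.toEquiv f.toEquiv
  map_rel_iff' {u v} := by
    rcases u with u | u <;> rcases v with v | v <;> simp [graphJoin, SimpleGraph.Iso.map_adj_iff]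

def boxProdBotTopIsoUnionKGraph {m n : ℕ} (e : α ≃ Fin m) (f : β ≃ Fin n) :
    SimpleGraph.boxProd (⊥ : SimpleGraph α) (⊤ : SimpleGraph β) ≃g unionKGraph m n where
  toEquiv := e.prodCongr f
  map_rel_iff' := by simp [unionKGraph, and_comm]

end GraphIsos

/-- If `|H| = n` and `G/H ≅ Z₂ × Z₂`, then `Γ_H(G) ≅ K₁ ∨ 3Kₙ`. -/
theorem statement_18 {G : Type*} [Group G] [Fintype G] (H : Subgroup G) [H.Normal]
    (n : ℕ) (hcard : Nat.card H = n)
    (hq : Nonempty (G ⧸ H ≃* Multiplicative (ZMod 2) × Multiplicative (ZMod 2))) :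
    Nonempty (nsbPowerGraph G H ≃g graphJoin (kGraph 1) (unionKGraph 3 n)) := by
  obtain ⟨φ⟩ := hq
  have klein_sq : ∀ t : Multiplicative (ZMod 2) × Multiplicative (ZMod 2), t ^ 2 = 1 := by decide
  have hsq (q : G ⧸ H) : q ^ 2 = 1 := φ.injective <| by rw [map_pow, map_one, klein_sq]
  have hcard_ne_one : Nat.card {q : G ⧸ H // q ≠ 1} = 3 := by
    rw [Nat.card_congr (φ.toEquiv.subtypeEquiv (p := (· ≠ 1)) (q := (· ≠ 1))
      fun _ => (map_ne_one_iff φ φ.injective).symm)]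
    simp [Nat.card_eq_fintype_card]
  exact ⟨(nsbPowerGraphIsoOfSqEqOne hsq).symm.trans <| graphJoinCongr .refl <|
    boxProdBotTopIsoUnionKGraph (Finite.equivFinOfCardEq hcard_ne_one)
      (Finite.equivFinOfCardEq hcard)⟩
end
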